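/- arXiv:2506.11447 — 4 statements merged into one kernel-verified Lean document; each statement's English description precedes it below -/
import Mathlib

section
/- For every positive integer m, the number of Λ_o-partitions of 2m equals o(m) − 1 if m is odd, and equals o(m) if m is even, where o(m) denotes the number of partitions of m into odd parts. (This is the coefficient form of the generating function identity ∑_{n≥0} ρ_o(n) q^n = 1/(q²;q⁴)_∞ − q²/(1−q⁴) − 1.) -/
/-!
Removing the largest part `m` from a Λ_o-partition of `2m` leaves a partition of `m` into odd
parts that does not use `m` itself, and every such partition arises this way. A partition of `m`
having `m` as a part is the one-part partition `(m)`, which consists of odd parts exactly when `m`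
is odd; so it has to be discarded from the `o(m)` odd partitions precisely in that case.
-/

/-- Λ_o: a Λ-partition (largest part `ℓ` appears exactly once, every other part
is strictly less than `ℓ`, and `n = 2 * ℓ`) in which every part other than the
largest part is odd. -/
def IsLambdaO {n : ℕ} (p : n.Partition) : Prop :=
  ∃ ℓ ∈ p.parts, p.parts.count ℓ = 1 ∧ (∀ a ∈ p.parts, a ≠ ℓ → a < ℓ ∧ Odd a) ∧
    n = 2 * ℓ

open Multiset

namespace Nat.Partition

theorem mem_parts_self_iff {n : ℕ} (hn : n ≠ 0) (q : n.Partition) :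
    n ∈ q.parts ↔ q = indiscrete n := by
  refine ⟨fun h => ?_, fun h => by simp [h, indiscrete_parts hn]⟩
  have hrest : q.parts.erase n = 0 := by
    refine eq_zero_of_forall_notMem fun a ha => ?_
    have hsum := sum_erase h
    have hle := le_sum_of_mem ha
    have hpos := q.parts_pos (mem_of_mem_erase ha)
    rw [q.parts_sum] at hsum
    omega
  ext1
  rw [indiscrete_parts hn, ← cons_erase h, hrest]
  rfl

theorem indiscrete_mem_odds {n : ℕ} (hn : Odd n) : indiscrete n ∈ odds n := by
  simp [odds, restricted, indiscrete_parts (Nat.ne_of_gt hn.pos), Nat.not_even_iff_odd, hn]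

theorem filter_odds_notMem_parts_self_of_odd {n : ℕ} (hn : Odd n) :
    (odds n).filter (n ∉ ·.parts) = (odds n).erase (indiscrete n) := by
  simp_rw [mem_parts_self_iff (Nat.ne_of_gt hn.pos)]
  exact Finset.filter_ne' _ _

theorem filter_odds_notMem_parts_self_of_even {n : ℕ} (hn : Even n) :
    (odds n).filter (n ∉ ·.parts) = odds n :=
  Finset.filter_true_of_mem fun q hq hmem => by
    simp only [odds, restricted, Finset.mem_filter, Finset.mem_univ, true_and] at hq
    exact hq n hmem hn

end Nat.Partition

open Nat.Partition

theorem mem_parts_of_isLambdaO {m : ℕ} {p : (2 * m).Partition} (h : IsLambdaO p) :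
    m ∈ p.parts := by
  obtain ⟨ℓ, hℓ, -, -, h2ℓ⟩ := h
  obtain rfl : ℓ = m := by omega
  exact hℓ

theorem isLambdaO_iff_erase {m : ℕ} {p : (2 * m).Partition} (hp : m ∈ p.parts) :
    IsLambdaO p ↔ (∀ i ∈ p.parts.erase m, ¬Even i) ∧ m ∉ p.parts.erase m := by
  have hcount : m ∉ p.parts.erase m ↔ p.parts.count m = 1 := by
    rw [← count_eq_zero, count_erase_self]
    have := count_pos.mpr hp
    omega
  constructor
  · rintro ⟨ℓ, -, hcount₁, hsmall, h2ℓ⟩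
    obtain rfl : ℓ = m := by omega
    have hnotMem := hcount.mpr hcount₁
    refine ⟨fun i hi => Nat.not_even_iff_odd.mpr ?_, hnotMem⟩
    exact (hsmall i (mem_of_mem_erase hi) (ne_of_mem_of_not_mem hi hnotMem)).2
  · rintro ⟨hodd, hnotMem⟩
    refine ⟨m, hp, hcount.mp hnotMem, fun a ha hne => ⟨?_, ?_⟩, rfl⟩
    · have hsum := sum_erase hp
      have hle := le_sum_of_mem ((mem_erase_of_ne hne).mpr ha)
      rw [p.parts_sum] at hsum
      omega
    · exact Nat.not_even_iff_odd.mp (hodd a ((mem_erase_of_ne hne).mpr ha))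

def lambdaOEquiv {m : ℕ} (hm : 0 < m) :
    {p : (2 * m).Partition // IsLambdaO p} ≃
      {q : (2 * m - m).Partition // (∀ i ∈ q.parts, ¬Even i) ∧ m ∉ q.parts} :=
  (Equiv.subtypeSubtypeEquivSubtype mem_parts_of_isLambdaO).symm.trans <|
    (partitionWithPartEquiv hm (by omega)).subtypeEquiv fun p => by
      simpa using isLambdaO_iff_erase p.2

theorem card_isLambdaO {m : ℕ} (hm : 0 < m) :
    Nat.card {p : (2 * m).Partition // IsLambdaO p} =
      ((odds m).filter (m ∉ ·.parts)).card := by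
  rw [Nat.card_congr (lambdaOEquiv hm), show 2 * m - m = m by omega,
    Nat.card_eq_fintype_card, Fintype.card_subtype]
  congr 1
  ext q
  simp [odds, restricted]

/-- For every positive integer `m`, the number of Λ_o-partitions of `2m` equals
`o(m) - 1` if `m` is odd and `o(m)` if `m` is even, where `o(m)` counts
partitions of `m` into odd parts. -/
theorem stmt_3 (m : ℕ) (hm : 0 < m) :
    (Odd m → Nat.card {p : (2 * m).Partition // IsLambdaO p} =
      (Nat.Partition.odds m).card - 1) ∧
    (Even m → Nat.card {p : (2 * m).Partition // IsLambdaO p} =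
      (Nat.Partition.odds m).card) := by
  rw [card_isLambdaO hm]
  refine ⟨fun hodd => ?_, fun heven => ?_⟩
  · rw [filter_odds_notMem_parts_self_of_odd hodd,
      Finset.card_erase_of_mem (indiscrete_mem_odds hodd)]
  · rw [filter_odds_notMem_parts_self_of_even heven]
end

section
/- For every positive integer m, the number of Λ_3-partitions of 2m equals dp₃(m) − 1 if 3 does not divide m, and equals dp₃(m) if 3 divides m, where dp₃(m) denotes the number of partitions of m into distinct parts each congruent to 1 or 2 modulo 3. (This is the coefficient form of the generating function identity ∑_{n≥0} ρ₃(n) q^n = (−q²,−q⁴;q⁶)_∞ − q²/(1−q²) + q⁶/(1−q⁶).) -/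
/-- Λ_3: a Λ-partition (largest part `ℓ` appears exactly once, every other part
is strictly less than `ℓ`, and `n = 2 * ℓ`) in which the parts other than the
largest part are distinct and congruent to `±1 (mod 3)`. -/
def IsLambda3 {n : ℕ} (p : n.Partition) : Prop :=
  ∃ ℓ ∈ p.parts, p.parts.count ℓ = 1 ∧
    (∀ a ∈ p.parts, a ≠ ℓ → a < ℓ ∧ (a % 3 = 1 ∨ a % 3 = 2)) ∧
    (p.parts.erase ℓ).Nodup ∧ n = 2 * ℓ

/-- `dp₃(m)`: the number of partitions of `m` into distinct parts, each
congruent to `1` or `2` modulo `3`. -/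
noncomputable def dp3 (m : ℕ) : ℕ :=
  Nat.card {q : m.Partition // q.parts.Nodup ∧ ∀ a ∈ q.parts, a % 3 = 1 ∨ a % 3 = 2}

section Aux

variable {m : ℕ}

/-- erase the largest part -/
def eraseTop (m : ℕ) (p : (2 * m).Partition) (hp : m ∈ p.parts) : m.Partition where
  parts := p.parts.erase m
  parts_pos h := p.parts_pos (Multiset.mem_of_mem_erase h)
  parts_sum := by
    have h := Multiset.cons_erase hp
    have h2 : p.parts.sum = 2 * m := p.parts_sum
    rw [← h, Multiset.sum_cons] at h2
    omega

def addTop (m : ℕ) (q : m.Partition) (hm : 0 < m) : (2 * m).Partition where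
  parts := m ::ₘ q.parts
  parts_pos h := by
    rcases Multiset.mem_cons.1 h with h | h
    · omega
    · exact q.parts_pos h
  parts_sum := by rw [Multiset.sum_cons, q.parts_sum]; ring

theorem lam3_ell (hm : 0 < m) {p : (2 * m).Partition} (hp : IsLambda3 p) :
    m ∈ p.parts ∧ p.parts.count m = 1 ∧
    (∀ a ∈ p.parts, a ≠ m → a < m ∧ (a % 3 = 1 ∨ a % 3 = 2)) ∧
    (p.parts.erase m).Nodup := by
  obtain ⟨ℓ, h1, h2, h3, h4, h5⟩ := hp
  have : ℓ = m := by omega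
  subst this
  exact ⟨h1, h2, h3, h4⟩

noncomputable def lamEquiv (hm : 0 < m) :
    {p : (2 * m).Partition // IsLambda3 p} ≃
    {q : m.Partition // (q.parts.Nodup ∧ ∀ a ∈ q.parts, a % 3 = 1 ∨ a % 3 = 2)
      ∧ m ∉ q.parts} where
  toFun p := by
    refine ⟨eraseTop m p.1 (lam3_ell hm p.2).1, ⟨(lam3_ell hm p.2).2.2.2, ?_⟩, ?_⟩
    · intro a ha
      have ham : a ≠ m := by
        intro h; subst h
        have := Multiset.count_erase_self a p.1.parts
        rw [(lam3_ell hm p.2).2.1] at this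
        exact (Multiset.count_eq_zero.1 this) ha
      exact ((lam3_ell hm p.2).2.2.1 a (Multiset.mem_of_mem_erase ha) ham).2
    · intro h
      have := Multiset.count_erase_self m p.1.parts
      rw [(lam3_ell hm p.2).2.1] at this
      exact (Multiset.count_eq_zero.1 this) h
  invFun q := by
    refine ⟨addTop m q.1 hm, m, Multiset.mem_cons_self _ _, ?_, ?_, ?_, rfl⟩
    · show (m ::ₘ q.1.parts).count m = 1
      rw [Multiset.count_cons_self, Multiset.count_eq_zero.2 q.2.2]
    · intro a ha hne
      have haq : a ∈ q.1.parts := by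
        rcases Multiset.mem_cons.1 ha with h | h
        · exact absurd h hne
        · exact h
      have hle : a ≤ m := by
        have := Multiset.single_le_sum (fun x _ => Nat.zero_le x) a haq
        rwa [q.1.parts_sum] at this
      exact ⟨lt_of_le_of_ne hle hne, q.2.1.2 a haq⟩
    · show ((m ::ₘ q.1.parts).erase m).Nodup
      rw [Multiset.erase_cons_head]
      exact q.2.1.1
  left_inv p := by
    apply Subtype.ext
    apply Nat.Partition.ext
    show m ::ₘ p.1.parts.erase m = p.1.parts
    exact Multiset.cons_erase (lam3_ell hm p.2).1
  right_inv q := by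
    apply Subtype.ext
    apply Nat.Partition.ext
    show (m ::ₘ q.1.parts).erase m = q.1.parts
    exact Multiset.erase_cons_head _ _

theorem parts_eq_of_mem (hm : 0 < m) {q : m.Partition} (h : m ∈ q.parts) :
    q.parts = {m} := by
  have hc := Multiset.cons_erase h
  have hs : q.parts.sum = m := q.parts_sum
  rw [← hc, Multiset.sum_cons] at hs
  have he : (q.parts.erase m).sum = 0 := by omega
  have : q.parts.erase m = 0 := by
    by_contra h0
    obtain ⟨a, ha⟩ := Multiset.exists_mem_of_ne_zero h0
    have := q.parts_pos (Multiset.mem_of_mem_erase ha)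
    have := Multiset.single_le_sum (fun x _ => Nat.zero_le x) a ha
    omega
  rw [← hc, this]
  rfl

end Aux

/-- For every positive integer `m`, the number of Λ_3-partitions of `2m` equals
`dp₃(m) - 1` if `3 ∤ m` and `dp₃(m)` if `3 ∣ m`. -/
theorem stmt_5 (m : ℕ) (hm : 0 < m) :
    (¬ (3 ∣ m) → Nat.card {p : (2 * m).Partition // IsLambda3 p} = dp3 m - 1) ∧
    ((3 ∣ m) → Nat.card {p : (2 * m).Partition // IsLambda3 p} = dp3 m) := by
  classical
  set P := fun q : m.Partition => q.parts.Nodup ∧ ∀ a ∈ q.parts, a % 3 = 1 ∨ a % 3 = 2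
  have key : dp3 m = Nat.card {q : m.Partition // P q ∧ m ∈ q.parts}
      + Nat.card {q : m.Partition // P q ∧ m ∉ q.parts} := by
    rw [dp3, ← Nat.card_sum]
    apply Nat.card_congr
    have e1 : {x : {q : m.Partition // P q} // m ∈ x.1.parts} ≃
        {q : m.Partition // P q ∧ m ∈ q.parts} :=
      Equiv.subtypeSubtypeEquivSubtypeInter P (fun q => m ∈ q.parts)
    have e2 : {x : {q : m.Partition // P q} // ¬ m ∈ x.1.parts} ≃
        {q : m.Partition // P q ∧ m ∉ q.parts} :=
      Equiv.subtypeSubtypeEquivSubtypeInter P (fun q => m ∉ q.parts)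
    exact ((Equiv.sumCompl (fun q : {q : m.Partition // P q} => m ∈ q.1.parts)).symm.trans
      (Equiv.sumCongr e1 e2))
  have hL : Nat.card {p : (2 * m).Partition // IsLambda3 p}
      = Nat.card {q : m.Partition // P q ∧ m ∉ q.parts} :=
    Nat.card_congr (lamEquiv hm)
  constructor
  · intro h3
    have hmem : Nat.card {q : m.Partition // P q ∧ m ∈ q.parts} = 1 := by
      rw [Nat.card_eq_one_iff_unique]
      constructor
      · constructor
        intro q r
        apply Subtype.ext; apply Nat.Partition.ext
        rw [parts_eq_of_mem hm q.2.2, parts_eq_of_mem hm r.2.2]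
      · refine ⟨⟨⟨{m}, by simp [hm], by simp⟩, ⟨by simp, ?_⟩, by simp⟩⟩
        intro a ha
        simp only [Multiset.mem_singleton] at ha
        subst ha
        omega
    omega
  · intro h3
    have hmem : Nat.card {q : m.Partition // P q ∧ m ∈ q.parts} = 0 := by
      rw [Nat.card_eq_zero]
      left
      rw [isEmpty_subtype]
      rintro q ⟨⟨_, hmod⟩, hmq⟩
      have := hmod m hmq
      omega
    omega
end

section
/- For every positive integer m, the number of Λ_6-partitions of 2m equals p₆(m) − 1 if m is congruent to 1 or 5 modulo 6, and equals p₆(m) otherwise, where p₆(m) denotes the number of partitions of m into parts each congruent to 1 or 5 modulo 6. (This is the coefficient form of the generating function identity ∑_{n≥0} ρ₆(n) q^n = 1/(q²,q¹⁰;q¹²)_∞ − (q²+q¹⁰)/(1−q¹²).) -/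
/-- Λ_6: a Λ-partition (largest part `ℓ` appears exactly once, every other part
is strictly less than `ℓ`, and `n = 2 * ℓ`) in which every part other than the
largest part is congruent to `±1 (mod 6)`. -/
def IsLambda6 {n : ℕ} (p : n.Partition) : Prop :=
  ∃ ℓ ∈ p.parts, p.parts.count ℓ = 1 ∧
    (∀ a ∈ p.parts, a ≠ ℓ → a < ℓ ∧ (a % 6 = 1 ∨ a % 6 = 5)) ∧ n = 2 * ℓ

/-- `p₆(m)`: the number of partitions of `m` into parts each congruent to `1`
or `5` modulo `6`. -/
noncomputable def p6 (m : ℕ) : ℕ :=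
  Nat.card {q : m.Partition // ∀ a ∈ q.parts, a % 6 = 1 ∨ a % 6 = 5}

lemma part_le {m : ℕ} (q : m.Partition) {a : ℕ} (ha : a ∈ q.parts) : a ≤ m := by
  conv_rhs => rw [← q.parts_sum]
  exact Multiset.single_le_sum (fun x _ => Nat.zero_le x) a ha

lemma parts_eq_singleton {m : ℕ} (q : m.Partition) (h : m ∈ q.parts) (hm : 0 < m) :
    q.parts = {m} := by
  have hce := Multiset.cons_erase h
  have hsum : (m ::ₘ q.parts.erase m).sum = m := by rw [hce, q.parts_sum]
  rw [Multiset.sum_cons] at hsum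
  have h0 : (q.parts.erase m).sum = 0 := by omega
  have hz : q.parts.erase m = 0 := by
    rw [Multiset.sum_eq_zero_iff] at h0
    by_contra hne
    obtain ⟨x, hx⟩ := Multiset.exists_mem_of_ne_zero hne
    have h1 := h0 x hx
    have h2 := q.parts_pos (Multiset.mem_of_mem_erase hx)
    omega
  rw [← hce, hz]; rfl

lemma lambda_facts {m : ℕ} (hm : 0 < m) (p : (2 * m).Partition) (hp : IsLambda6 p) :
    m ∈ p.parts ∧ p.parts.count m = 1 ∧
      (∀ a ∈ p.parts, a ≠ m → a < m ∧ (a % 6 = 1 ∨ a % 6 = 5)) := by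
  obtain ⟨ℓ, h1, h2, h3, h4⟩ := hp
  have : ℓ = m := by omega
  subst this
  exact ⟨h1, h2, h3⟩

/-- the key equivalence -/
noncomputable def lambdaEquiv (m : ℕ) (hm : 0 < m) :
    {p : (2 * m).Partition // IsLambda6 p} ≃
    {q : m.Partition // (∀ a ∈ q.parts, a % 6 = 1 ∨ a % 6 = 5) ∧ m ∉ q.parts} where
  toFun := fun pp =>
    ⟨⟨pp.1.parts.erase m,
      fun hx => pp.1.parts_pos (Multiset.mem_of_mem_erase hx), by
        obtain ⟨hmem, hcount, hoth⟩ := lambda_facts hm pp.1 pp.2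
        have hce := Multiset.cons_erase hmem
        have hs : (m ::ₘ pp.1.parts.erase m).sum = 2 * m := by rw [hce, pp.1.parts_sum]
        rw [Multiset.sum_cons] at hs
        omega⟩, by
      obtain ⟨hmem, hcount, hoth⟩ := lambda_facts hm pp.1 pp.2
      have hnm : m ∉ pp.1.parts.erase m := by
        have hc := Multiset.count_erase_self m pp.1.parts
        rw [hcount] at hc
        rw [← Multiset.count_pos]
        omega
      constructor
      · intro a ha
        exact (hoth a (Multiset.mem_of_mem_erase ha) (fun h => hnm (h ▸ ha))).2
      · exact hnm⟩
  invFun := fun qq =>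
    ⟨⟨m ::ₘ qq.1.parts, fun hx => by
        rcases Multiset.mem_cons.mp hx with h | h
        · omega
        · exact qq.1.parts_pos h, by
        rw [Multiset.sum_cons, qq.1.parts_sum]; ring⟩,
      ⟨m, Multiset.mem_cons_self m _, by
        rw [Multiset.count_cons_self, Multiset.count_eq_zero_of_notMem qq.2.2],
       fun a ha hne => by
        have ha' : a ∈ qq.1.parts := by
          rcases Multiset.mem_cons.mp ha with h | h
          · exact absurd h hne
          · exact h
        exact ⟨lt_of_le_of_ne (part_le qq.1 ha') hne, qq.2.1 a ha'⟩, rfl⟩⟩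
  left_inv := fun pp => by
    apply Subtype.ext
    apply Nat.Partition.ext
    show m ::ₘ pp.1.parts.erase m = pp.1.parts
    exact Multiset.cons_erase (lambda_facts hm pp.1 pp.2).1
  right_inv := fun qq => by
    apply Subtype.ext
    apply Nat.Partition.ext
    show (m ::ₘ qq.1.parts).erase m = qq.1.parts
    exact Multiset.erase_cons_head m qq.1.parts

/-- For every positive integer `m`, the number of Λ_6-partitions of `2m` equals
`p₆(m) - 1` if `m ≡ ±1 (mod 6)` and `p₆(m)` otherwise. -/
theorem stmt_6 (m : ℕ) (hm : 0 < m) :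
    ((m % 6 = 1 ∨ m % 6 = 5) →
      Nat.card {p : (2 * m).Partition // IsLambda6 p} = p6 m - 1) ∧
    (¬ (m % 6 = 1 ∨ m % 6 = 5) →
      Nat.card {p : (2 * m).Partition // IsLambda6 p} = p6 m) := by
  classical
  have e2 := Equiv.subtypeSubtypeEquivSubtypeInter
    (fun q : m.Partition => ∀ a ∈ q.parts, a % 6 = 1 ∨ a % 6 = 5)
    (fun q : m.Partition => m ∉ q.parts)
  have hcard : Nat.card {p : (2 * m).Partition // IsLambda6 p} =
      Nat.card {u : {q : m.Partition // ∀ a ∈ q.parts, a % 6 = 1 ∨ a % 6 = 5} //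
        ¬ (m ∈ u.1.parts)} :=
    Nat.card_congr ((lambdaEquiv m hm).trans e2.symm)
  have hcompl : Nat.card {u : {q : m.Partition // ∀ a ∈ q.parts, a % 6 = 1 ∨ a % 6 = 5} //
        ¬ (m ∈ u.1.parts)} =
      p6 m - Nat.card {u : {q : m.Partition // ∀ a ∈ q.parts, a % 6 = 1 ∨ a % 6 = 5} //
        m ∈ u.1.parts} := by
    rw [p6, Nat.card_eq_fintype_card, Nat.card_eq_fintype_card, Nat.card_eq_fintype_card]
    exact Fintype.card_subtype_compl _
  rw [hcard, hcompl]
  constructor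
  · intro hmod
    have h1 : Nat.card {u : {q : m.Partition // ∀ a ∈ q.parts, a % 6 = 1 ∨ a % 6 = 5} //
        m ∈ u.1.parts} = 1 := by
      rw [Nat.card_eq_one_iff_unique]
      have hq0pos : ∀ {i : ℕ}, i ∈ ({m} : Multiset ℕ) → 0 < i := by
        intro i hi
        rw [Multiset.mem_singleton] at hi
        omega
      have hq0mod : ∀ a ∈ (⟨{m}, hq0pos, Multiset.sum_singleton m⟩ : Nat.Partition m).parts,
          a % 6 = 1 ∨ a % 6 = 5 := by
        intro a ha
        rw [Multiset.mem_singleton] at ha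
        subst ha
        exact hmod
      refine ⟨⟨fun u v => ?_⟩, ⟨⟨⟨⟨{m}, hq0pos, Multiset.sum_singleton m⟩, hq0mod⟩,
        Multiset.mem_singleton_self m⟩⟩⟩
      apply Subtype.ext; apply Subtype.ext; apply Nat.Partition.ext
      rw [parts_eq_singleton u.1.1 u.2 hm, parts_eq_singleton v.1.1 v.2 hm]
    rw [h1]
  · intro hmod
    have h0 : Nat.card {u : {q : m.Partition // ∀ a ∈ q.parts, a % 6 = 1 ∨ a % 6 = 5} //
        m ∈ u.1.parts} = 0 := by
      have : IsEmpty {u : {q : m.Partition // ∀ a ∈ q.parts, a % 6 = 1 ∨ a % 6 = 5} //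
          m ∈ u.1.parts} := ⟨fun u => hmod (u.1.2 m u.2)⟩
      exact Nat.card_of_isEmpty
    rw [h0, Nat.sub_zero]
end

section
/- For every positive integer m, the number of Λ_d-partitions of 2m equals the number of partitions of m into at least two distinct parts. -/
/-- A Λ-partition of `n`: the largest part `ℓ` appears exactly once, every other
part is strictly less than `ℓ`, and `n = 2 * ℓ`. -/
def IsLambda {n : ℕ} (p : n.Partition) : Prop :=
  ∃ ℓ ∈ p.parts, p.parts.count ℓ = 1 ∧ (∀ a ∈ p.parts, a ≠ ℓ → a < ℓ) ∧ n = 2 * ℓ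

/-- Λ_d: a Λ-partition all of whose parts are distinct. -/
def IsLambdaD {n : ℕ} (p : n.Partition) : Prop :=
  IsLambda p ∧ p.parts.Nodup

lemma aux_ell {m : ℕ} (hm : 0 < m) {p : (2 * m).Partition} (hp : IsLambdaD p) :
    m ∈ p.parts ∧ (∀ a ∈ p.parts, a ≠ m → a < m) := by
  obtain ⟨⟨ℓ, hℓ, hc, hlt, he⟩, hnd⟩ := hp
  have : ℓ = m := by omega
  subst this
  exact ⟨hℓ, hlt⟩

lemma aux_erase_sum {m : ℕ} {p : (2 * m).Partition} (hmem : m ∈ p.parts) :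
    (p.parts.erase m).sum = m := by
  have h1 : (m ::ₘ p.parts.erase m).sum = 2 * m := by
    rw [Multiset.cons_erase hmem, p.parts_sum]
  simp [Multiset.sum_cons] at h1
  omega

lemma aux_q_lt {m : ℕ} (q : m.Partition) (hq : 2 ≤ Multiset.card q.parts) :
    ∀ a ∈ q.parts, a < m := by
  intro a ha
  have hle : a ≤ q.parts.sum :=
    Multiset.single_le_sum (fun x _ => Nat.zero_le x) a ha
  rw [q.parts_sum] at hle
  rcases lt_or_eq_of_le hle with h | h
  · exact h
  · exfalso
    subst h
    have hsum : (q.parts.erase a).sum = 0 := by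
      have h1 : (a ::ₘ q.parts.erase a).sum = a := by
        rw [Multiset.cons_erase ha, q.parts_sum]
      rw [Multiset.sum_cons] at h1
      omega
    have hcard : 1 ≤ Multiset.card (q.parts.erase a) := by
      have h2 : Multiset.card (a ::ₘ q.parts.erase a) = Multiset.card q.parts := by
        rw [Multiset.cons_erase ha]
      rw [Multiset.card_cons] at h2
      omega
    obtain ⟨b, hb⟩ := Multiset.card_pos_iff_exists_mem.1 hcard
    have hbpos : 0 < b := q.parts_pos (Multiset.mem_of_mem_erase hb)
    have : b ≤ (q.parts.erase a).sum :=
      Multiset.single_le_sum (fun x _ => Nat.zero_le x) b hb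
    omega

lemma aux_card {m : ℕ} (hm : 0 < m) {p : (2 * m).Partition} (hp : IsLambdaD p) :
    2 ≤ Multiset.card (p.parts.erase m) := by
  obtain ⟨hmem, hlt⟩ := aux_ell hm hp
  by_contra h
  push_neg at h
  interval_cases hc : Multiset.card (p.parts.erase m)
  · have h0 : p.parts.erase m = 0 := Multiset.card_eq_zero.1 hc
    have := aux_erase_sum hmem
    rw [h0] at this
    simp at this
    omega
  · obtain ⟨a, ha⟩ := Multiset.card_eq_one.1 hc
    have hsum := aux_erase_sum hmem
    rw [ha] at hsum
    simp at hsum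
    have ham : a ∈ p.parts.erase m := by rw [ha]; simp
    have hane : a ≠ m := by
      intro h'
      subst h'
      exact Multiset.Nodup.notMem_erase hp.2 ham
    have := hlt a (Multiset.mem_of_mem_erase ham) hane
    omega

def toQ (m : ℕ) (hm : 0 < m) (p : {p : (2 * m).Partition // IsLambdaD p}) :
    {q : m.Partition // q.parts.Nodup ∧ 2 ≤ Multiset.card q.parts} :=
  ⟨⟨p.1.parts.erase m, fun h => p.1.parts_pos (Multiset.mem_of_mem_erase h),
      aux_erase_sum (aux_ell hm p.2).1⟩, Multiset.Nodup.erase _ p.2.2, aux_card hm p.2⟩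

def toP (m : ℕ) (hm : 0 < m) (q : {q : m.Partition // q.parts.Nodup ∧ 2 ≤ Multiset.card q.parts}) :
    {p : (2 * m).Partition // IsLambdaD p} := by
  have hlt := aux_q_lt q.1 q.2.2
  have hnm : m ∉ q.1.parts := fun h => lt_irrefl m (hlt m h)
  refine ⟨⟨m ::ₘ q.1.parts, ?_, ?_⟩, ⟨m, ?_, ?_, ?_, rfl⟩, ?_⟩
  · intro a ha
    rcases Multiset.mem_cons.1 ha with h | h
    · omega
    · exact q.1.parts_pos h
  · rw [Multiset.sum_cons, q.1.parts_sum]; omega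
  · simp
  · simp [Multiset.count_cons_self, Multiset.count_eq_zero_of_notMem hnm]
  · intro a ha hane
    rcases Multiset.mem_cons.1 ha with h | h
    · exact absurd h hane
    · exact hlt a h
  · exact Multiset.nodup_cons.2 ⟨hnm, q.2.1⟩

/-- For every positive integer `m`, the number of Λ_d-partitions of `2m` equals
the number of partitions of `m` into at least two distinct parts. -/
theorem stmt_8 (m : ℕ) (hm : 0 < m) :
    Nat.card {p : (2 * m).Partition // IsLambdaD p} =
      Nat.card {q : m.Partition // q.parts.Nodup ∧ 2 ≤ Multiset.card q.parts} := by
  apply Nat.card_congr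
  refine ⟨toQ m hm, toP m hm, ?_, ?_⟩
  · intro p
    apply Subtype.ext
    apply Nat.Partition.ext
    show m ::ₘ p.1.parts.erase m = p.1.parts
    exact Multiset.cons_erase (aux_ell hm p.2).1
  · intro q
    apply Subtype.ext
    apply Nat.Partition.ext
    show (m ::ₘ q.1.parts).erase m = q.1.parts
    exact Multiset.erase_cons_head m q.1.parts
end
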